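/- In a complete d-ary tree of height h, the hitting time of a simple random walk from a vertex at distance l from the root to the root equals f_h(d) - f_{h-l}(d), where f_0(d) = 0 and f_n(d) = (Σ_{i=0}^{n-1} (2n-2i) d^i) - n for n ≥ 1. -/

import Mathlib

open scoped Classical

/-- Transition probability of the simple random walk on `G`. -/
noncomputable def stepProb {V : Type*} [Fintype V] (G : SimpleGraph V) (a b : V) : ℝ :=
  if G.Adj a b then 1 / (G.degree a) else 0

/-- Probability that the simple random walk started at `u` follows the step sequence `w`. -/
noncomputable def walkProb {V : Type*} [Fintype V] (G : SimpleGraph V) :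
    (u : V) → {n : ℕ} → (Fin n → V) → ℝ
  | _, 0, _ => 1
  | u, n + 1, w => stepProb G u (w 0) * walkProb G (w 0) (fun i : Fin n => w i.succ)

/-- Probability that the walk started at `u` first reaches `v` at time exactly `n` (for `n ≥ 1`). -/
noncomputable def firstHitProb {V : Type*} [Fintype V] (G : SimpleGraph V) (u v : V) (n : ℕ) : ℝ :=
  ∑ w ∈ Finset.univ.filter (fun w : Fin n → V =>
      (∀ i : Fin n, (i : ℕ) + 1 < n → w i ≠ v) ∧ ∀ i : Fin n, (i : ℕ) + 1 = n → w i = v),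
    walkProb G u w

/-- Expected hitting time of `v` for the simple random walk on `G` started at `u`. -/
noncomputable def hittingTime {V : Type*} [Fintype V] (G : SimpleGraph V) (u v : V) : ℝ :=
  if u = v then 0 else ∑' n : ℕ, (n : ℝ) * firstHitProb G u v n

/-- Expected first return time to `v` of the simple random walk on `G` started at `v`. -/
noncomputable def expectedReturnTime {V : Type*} [Fintype V] (G : SimpleGraph V) (v : V) : ℝ :=
  ∑' n : ℕ, (n : ℝ) * firstHitProb G v v n
/-- The polynomial `f_n(d)` from the hitting-time formulas for complete `d`-ary trees. -/
noncomputable def f (n : ℕ) (d : ℝ) : ℝ :=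
  if n = 0 then 0 else (∑ i ∈ Finset.range n, ((2 * n : ℝ) - 2 * i) * d ^ i) - n

/-- The complete `d`-ary tree of height `h`: vertices are sequences over `Fin d` of
length at most `h`, and a vertex is adjacent to each of its one-step extensions. -/
def daryTree (d h : ℕ) : SimpleGraph (Σ n : Fin (h + 1), Fin (n : ℕ) → Fin d) :=
  SimpleGraph.fromRel (fun x y =>
    ∃ _ : (x.1 : ℕ) + 1 = (y.1 : ℕ),
      ∀ i : Fin (x.1 : ℕ), y.2 ⟨i.val, by have := i.isLt; omega⟩ = x.2 i)

/-!
For `u ≠ v` the hitting time is the tail sum `∑ₙ P(T > n)`. From every vertex the walk reaches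
`v` within `|V|` steps with positive probability, so `P(T > n)` decays geometrically and all
series converge; conditioning on the first step then gives `H u = 1 + ∑_b P(u, b) H b`. These
equations have at most one solution vanishing at `v`, by the maximum principle. On the `d`-ary
tree the candidate `f_h(d) - f_{h-k}(d)`, with `k` the depth, solves them: at a leaf because
`f_1 = 1`, and at an inner vertex because of `f_{m+2} + d f_m = (d + 1) f_{m+1} + d + 1`.
-/

open Finset Filter Topology

theorem exists_le_geometric_of_antitone {a : ℕ → ℝ} (ha : Antitone a) {N : ℕ} (hN : N ≠ 0)
    {q : ℝ} (hq0 : 0 ≤ q) (hq1 : q < 1) (h : ∀ k, a (k * N) ≤ q ^ k) :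
    ∃ C r : ℝ, 0 ≤ r ∧ r < 1 ∧ ∀ n, a n ≤ C * r ^ n := by
  set r := max (q ^ (N⁻¹ : ℝ)) 2⁻¹
  have hr0 : 0 < r := lt_max_of_lt_right (by norm_num)
  have hr1 : r < 1 := max_lt (Real.rpow_lt_one hq0 hq1 (by positivity)) (by norm_num)
  have hqr : q ≤ r ^ N := by
    calc q = (q ^ (N⁻¹ : ℝ)) ^ N := (Real.rpow_inv_natCast_pow hq0 hN).symm
      _ ≤ r ^ N := pow_le_pow_left₀ (by positivity) (le_max_left _ _) N
  refine ⟨(r ^ N)⁻¹, r, hr0.le, hr1, fun n => ?_⟩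
  rw [inv_mul_eq_div, le_div_iff₀ (by positivity)]
  calc a n * r ^ N ≤ q ^ (n / N) * r ^ N :=
        mul_le_mul_of_nonneg_right ((ha (Nat.div_mul_le_self n N)).trans (h _)) (by positivity)
    _ ≤ (r ^ N) ^ (n / N) * r ^ N := by gcongr
    _ = r ^ (n / N * N + N) := by rw [pow_add, ← pow_mul, mul_comm N]
    _ ≤ r ^ n := pow_le_pow_of_le_one hr0.le hr1.le (Nat.lt_div_mul_add (by omega)).le

/-- Summation by parts; with `a n = P(T > n)` and `f n = P(T = n)` it is the tail-sum formula
`E T = ∑ₙ P(T > n)`. -/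
theorem hasSum_mul_of_eq_sub {a f : ℕ → ℝ} {A : ℝ} (hf : ∀ n, 0 ≤ f n)
    (hfa : ∀ n, f (n + 1) = a n - a (n + 1)) (ha : HasSum a A)
    (hlim : Tendsto (fun n : ℕ => n * a n) atTop (𝓝 0)) :
    HasSum (fun n : ℕ => n * f n) A := by
  have hpartial (N : ℕ) :
      ∑ n ∈ range N, ((n + 1 : ℕ) : ℝ) * f (n + 1) = ∑ n ∈ range N, a n - N * a N := by
    induction N with
    | zero => simp
    | succ N ih => rw [sum_range_succ, sum_range_succ, ih, hfa]; push_cast; ring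
  have hshift : HasSum (fun n : ℕ => ((n + 1 : ℕ) : ℝ) * f (n + 1)) A := by
    rw [hasSum_iff_tendsto_nat_of_nonneg (fun n => mul_nonneg n.succ.cast_nonneg (hf _))]
    simp_rw [hpartial]
    simpa using ha.tendsto_sum_nat.sub hlim
  exact (hasSum_nat_add_iff' 1).1 (by simpa using hshift)

theorem f_eq_sum (n : ℕ) (x : ℝ) : f n x = ∑ i ∈ range n, (2 * n - 2 * i : ℝ) * x ^ i - n := by
  unfold f
  split_ifs with hn <;> simp [hn]

theorem f_zero (x : ℝ) : f 0 x = 0 := by simp [f]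

theorem f_succ_sub (n : ℕ) (x : ℝ) :
    f (n + 1) x - f n x = 2 * ∑ i ∈ range (n + 1), x ^ i - 1 := by
  have hterm : ∀ i ∈ range n, (2 * ((n + 1 : ℕ) : ℝ) - 2 * i) * x ^ i =
      (2 * n - 2 * i) * x ^ i + 2 * x ^ i := fun i _ => by push_cast; ring
  rw [f_eq_sum, f_eq_sum, sum_range_succ _ n, sum_range_succ _ n, sum_congr rfl hterm,
    sum_add_distrib, ← mul_sum]
  push_cast
  ring

theorem f_one (x : ℝ) : f 1 x = 1 := by
  linarith [f_succ_sub 0 x, f_zero x, show ∑ i ∈ range 1, x ^ i = 1 by simp]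

theorem f_add_two (n : ℕ) (x : ℝ) :
    f (n + 2) x + x * f n x = (x + 1) * f (n + 1) x + (x + 1) := by
  have hgeom : ∑ i ∈ range (n + 2), x ^ i = 1 + x * ∑ i ∈ range (n + 1), x ^ i := by
    rw [sum_range_succ', mul_sum]
    simp [pow_succ', add_comm]
  linear_combination f_succ_sub (n + 1) x - x * f_succ_sub n x + 2 * hgeom

namespace SimpleGraph

variable {V : Type*} [Fintype V] {G : SimpleGraph V}

theorem stepProb_nonneg (a b : V) : 0 ≤ stepProb G a b := by
  unfold stepProb; split <;> positivity

theorem stepProb_pos {a b : V} (h : G.Adj a b) : 0 < stepProb G a b := by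
  have : 0 < G.degree a := (G.degree_pos_iff_exists_adj _).mpr ⟨b, h⟩
  rw [stepProb, if_pos h]
  positivity

theorem sum_stepProb_mul (a : V) (F : V → ℝ) :
    ∑ b, stepProb G a b * F b = (∑ b ∈ G.neighborFinset a, F b) / G.degree a := by
  rw [neighborFinset_eq_filter, sum_filter, sum_div]
  refine sum_congr rfl fun b _ => ?_
  unfold stepProb
  split_ifs <;> simp [div_eq_inv_mul]

theorem sum_stepProb {a : V} (h : 0 < G.degree a) : ∑ b, stepProb G a b = 1 := by
  simpa [card_neighborFinset_eq_degree, h.ne'] using sum_stepProb_mul (G := G) a 1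

theorem sum_stepProb_le_one (a : V) : ∑ b, stepProb G a b ≤ 1 := by
  by_cases h : 0 < G.degree a
  · exact (sum_stepProb h).le
  · have : ∀ b, ¬G.Adj a b := fun b hb => h ((G.degree_pos_iff_exists_adj a).2 ⟨b, hb⟩)
    simp [stepProb, this]

theorem walkProb_cons (u b : V) {n : ℕ} (t : Fin n → V) :
    walkProb G u (Fin.cons b t) = stepProb G u b * walkProb G b t := by
  simp [walkProb]

theorem walkProb_nonneg {n : ℕ} (u : V) (w : Fin n → V) : 0 ≤ walkProb G u w := by
  induction n generalizing u with
  | zero => exact zero_le_one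
  | succ n ih => exact mul_nonneg (stepProb_nonneg u _) (ih _ _)

theorem sum_filter_walkProb_succ {n : ℕ} (u : V) (p : V → Prop) (Q : (Fin n → V) → Prop)
    [DecidablePred p] [DecidablePred Q] :
    ∑ w ∈ univ.filter (fun w : Fin (n + 1) → V => p (w 0) ∧ Q (Fin.tail w)), walkProb G u w =
      ∑ b ∈ univ.filter p, stepProb G u b * ∑ t ∈ univ.filter Q, walkProb G b t := by
  simp only [sum_filter, mul_sum]
  rw [← Fintype.sum_equiv (Fin.consEquiv fun _ => V) _ _ (fun _ => rfl), Fintype.sum_prod_type]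
  refine sum_congr rfl fun b _ => ?_
  by_cases hb : p b <;> simp [hb, Fin.consEquiv, walkProb_cons]

theorem firstHitProb_nonneg (u v : V) (n : ℕ) : 0 ≤ firstHitProb G u v n :=
  sum_nonneg fun w _ => walkProb_nonneg u w

theorem firstHitProb_one (u v : V) : firstHitProb G u v 1 = stepProb G u v := by
  unfold firstHitProb
  rw [filter_congr (q := fun w : Fin 1 → V => w 0 = v ∧ (fun _ => True) (Fin.tail w)),
    sum_filter_walkProb_succ u (· = v) (fun _ => True)]
  · simp [walkProb, sum_filter]
  · simp [Fin.forall_fin_one]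

theorem firstHitProb_add_two (u v : V) (n : ℕ) :
    firstHitProb G u v (n + 2) =
      ∑ b ∈ univ.erase v, stepProb G u b * firstHitProb G b v (n + 1) := by
  unfold firstHitProb
  rw [← filter_ne', ← sum_filter_walkProb_succ]
  refine sum_congr (filter_congr fun w _ => ?_) fun _ _ => rfl
  simp [Fin.forall_fin_succ (n := n + 1), Fin.tail, and_assoc]

/-- The probability that the walk started at `u` avoids `v` at times `1, …, n`; time `0` is not
checked, so `avoidProb G v v n` need not vanish. -/
noncomputable def avoidProb (G : SimpleGraph V) (u v : V) (n : ℕ) : ℝ :=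
  ∑ w ∈ univ.filter (fun w : Fin n → V => ∀ i, w i ≠ v), walkProb G u w

theorem avoidProb_nonneg (u v : V) (n : ℕ) : 0 ≤ avoidProb G u v n :=
  sum_nonneg fun w _ => walkProb_nonneg u w

theorem avoidProb_zero (u v : V) : avoidProb G u v 0 = 1 := by
  simp [avoidProb, walkProb]

theorem avoidProb_succ (u v : V) (n : ℕ) :
    avoidProb G u v (n + 1) = ∑ b ∈ univ.erase v, stepProb G u b * avoidProb G b v n := by
  unfold avoidProb
  rw [← filter_ne', ← sum_filter_walkProb_succ]
  refine sum_congr (filter_congr fun w _ => ?_) fun _ _ => rfl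
  simp [Fin.forall_fin_succ, Fin.tail]

theorem avoidProb_le_one (u v : V) (n : ℕ) : avoidProb G u v n ≤ 1 := by
  induction n generalizing u with
  | zero => rw [avoidProb_zero]
  | succ n ih =>
    calc avoidProb G u v (n + 1) = ∑ b ∈ univ.erase v, stepProb G u b * avoidProb G b v n :=
          avoidProb_succ u v n
      _ ≤ ∑ b ∈ univ.erase v, stepProb G u b :=
          sum_le_sum fun b _ => mul_le_of_le_one_right (stepProb_nonneg u b) (ih b)
      _ ≤ ∑ b, stepProb G u b :=
          sum_le_sum_of_subset_of_nonneg (erase_subset v univ) fun b _ _ => stepProb_nonneg u b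
      _ ≤ 1 := sum_stepProb_le_one u

variable {u v : V}

theorem avoidProb_eq_avoidProb_succ_add_firstHitProb (hdeg : ∀ b, b ≠ v → 0 < G.degree b)
    (hu : u ≠ v) (n : ℕ) :
    avoidProb G u v n = avoidProb G u v (n + 1) + firstHitProb G u v (n + 1) := by
  induction n generalizing u with
  | zero =>
    simp only [avoidProb_zero, avoidProb_succ, mul_one, zero_add, firstHitProb_one]
    rw [sum_erase_add _ _ (mem_univ v), sum_stepProb (hdeg u hu)]
  | succ n ih =>
    rw [avoidProb_succ, avoidProb_succ, firstHitProb_add_two, ← sum_add_distrib]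
    refine sum_congr rfl fun b hb => ?_
    rw [ih (ne_of_mem_erase hb), mul_add]

theorem antitone_avoidProb (hdeg : ∀ b, b ≠ v → 0 < G.degree b) (hu : u ≠ v) :
    Antitone (avoidProb G u v) :=
  antitone_nat_of_succ_le fun n => by
    linarith [avoidProb_eq_avoidProb_succ_add_firstHitProb hdeg hu n,
      firstHitProb_nonneg (G := G) u v (n + 1)]

theorem avoidProb_length_lt_one (p : G.Walk u v) (hu : u ≠ v) :
    avoidProb G u v p.length < 1 := by
  induction p with
  | nil => exact absurd rfl hu
  | @cons u b v hadj q ih =>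
    have hdeg : 0 < G.degree u := (G.degree_pos_iff_exists_adj u).2 ⟨b, hadj⟩
    rw [Walk.length_cons, avoidProb_succ, ← sum_stepProb hdeg, ← sum_erase_add _ _ (mem_univ v)]
    have hle : ∀ c ∈ univ.erase v, stepProb G u c * avoidProb G c v q.length ≤ stepProb G u c :=
      fun c _ => mul_le_of_le_one_right (stepProb_nonneg u c) (avoidProb_le_one c v _)
    by_cases hb : b = v
    · subst hb
      linarith [sum_le_sum hle, stepProb_pos hadj]
    · have hlt := sum_lt_sum hle ⟨b, mem_erase.2 ⟨hb, mem_univ b⟩,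
        mul_lt_of_lt_one_right (stepProb_pos hadj) (ih hb)⟩
      linarith [stepProb_nonneg (G := G) u v]

theorem avoidProb_add_le {n : ℕ} {c : ℝ} (hc : ∀ b, b ≠ v → avoidProb G b v n ≤ c) (k : ℕ)
    (hu : u ≠ v) : avoidProb G u v (k + n) ≤ avoidProb G u v k * c := by
  induction k generalizing u with
  | zero => simpa [avoidProb_zero] using hc u hu
  | succ k ih =>
    rw [add_right_comm, avoidProb_succ, avoidProb_succ, sum_mul]
    refine sum_le_sum fun b hb => ?_
    rw [mul_assoc]
    exact mul_le_mul_of_nonneg_left (ih (ne_of_mem_erase hb)) (stepProb_nonneg u b)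

theorem degree_pos_of_reachable (h : G.Reachable u v) (hu : u ≠ v) : 0 < G.degree u := by
  obtain ⟨p⟩ := h
  cases p with
  | nil => exact absurd rfl hu
  | cons hadj _ => exact (G.degree_pos_iff_exists_adj u).2 ⟨_, hadj⟩

theorem exists_avoidProb_card_le (hconn : ∀ u, G.Reachable u v) :
    ∃ q, 0 ≤ q ∧ q < 1 ∧ ∀ b, b ≠ v → avoidProb G b v (Fintype.card V) ≤ q := by
  have hdeg b (hb : b ≠ v) := degree_pos_of_reachable (hconn b) hb
  have hlt b (hb : b ≠ v) : avoidProb G b v (Fintype.card V) < 1 := by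
    let p := (hconn b).some.bypass
    exact (antitone_avoidProb hdeg hb (Walk.bypass_isPath _).length_lt.le).trans_lt
      (avoidProb_length_lt_one p hb)
  let φ b := if b = v then 0 else avoidProb G b v (Fintype.card V)
  refine ⟨univ.sup' ⟨v, mem_univ v⟩ φ, le_sup'_of_le φ (mem_univ v) (by simp [φ]),
    (sup'_lt_iff _).2 fun b _ => ?_, fun b hb => le_sup'_of_le φ (mem_univ b) (by simp [φ, hb])⟩
  by_cases hb : b = v
  · simp [φ, hb]
  · simpa [φ, hb] using hlt b hb

theorem hittingTime_self (v : V) : hittingTime G v v = 0 := if_pos rfl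

section Connected

variable (hconn : ∀ u, G.Reachable u v)
include hconn

theorem exists_avoidProb_le_geometric (hu : u ≠ v) :
    ∃ C r : ℝ, 0 ≤ r ∧ r < 1 ∧ ∀ n, avoidProb G u v n ≤ C * r ^ n := by
  have hdeg b (hb : b ≠ v) := degree_pos_of_reachable (hconn b) hb
  obtain ⟨q, hq0, hq1, hq⟩ := exists_avoidProb_card_le hconn
  have hpow (k : ℕ) : ∀ b, b ≠ v → avoidProb G b v (k * Fintype.card V) ≤ q ^ k := by
    induction k with
    | zero => simpa using fun b _ => avoidProb_le_one b v 0
    | succ k ih =>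
      intro b hb
      rw [add_mul, one_mul, pow_succ]
      exact (avoidProb_add_le hq _ hb).trans (mul_le_mul_of_nonneg_right (ih b hb) hq0)
  exact exists_le_geometric_of_antitone (antitone_avoidProb hdeg hu)
    (Fintype.card_pos_iff.2 ⟨v⟩).ne' hq0 hq1 (fun k => hpow k u hu)

theorem summable_avoidProb (hu : u ≠ v) : Summable (avoidProb G u v) := by
  obtain ⟨C, r, hr0, hr1, hle⟩ := exists_avoidProb_le_geometric hconn hu
  exact .of_nonneg_of_le (avoidProb_nonneg u v) hle
    ((summable_geometric_of_lt_one hr0 hr1).mul_left C)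

theorem tendsto_mul_avoidProb (hu : u ≠ v) :
    Tendsto (fun n : ℕ => n * avoidProb G u v n) atTop (𝓝 0) := by
  obtain ⟨C, r, hr0, hr1, hle⟩ := exists_avoidProb_le_geometric hconn hu
  refine squeeze_zero (fun n => mul_nonneg n.cast_nonneg (avoidProb_nonneg u v n))
    (fun n => mul_le_mul_of_nonneg_left (hle n) n.cast_nonneg) ?_
  simpa [mul_left_comm] using (tendsto_self_mul_const_pow_of_lt_one hr0 hr1).const_mul C

theorem hittingTime_eq_tsum_avoidProb (hu : u ≠ v) :
    hittingTime G u v = ∑' n, avoidProb G u v n := by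
  have hdeg b (hb : b ≠ v) := degree_pos_of_reachable (hconn b) hb
  rw [hittingTime, if_neg hu]
  refine (hasSum_mul_of_eq_sub (firstHitProb_nonneg u v) (fun n => ?_)
    (summable_avoidProb hconn hu).hasSum (tendsto_mul_avoidProb hconn hu)).tsum_eq
  linarith [avoidProb_eq_avoidProb_succ_add_firstHitProb hdeg hu n]

theorem hittingTime_eq_one_add_sum (hu : u ≠ v) :
    hittingTime G u v = 1 + ∑ b, stepProb G u b * hittingTime G b v := by
  rw [hittingTime_eq_tsum_avoidProb hconn hu, (summable_avoidProb hconn hu).tsum_eq_zero_add,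
    avoidProb_zero]
  simp_rw [avoidProb_succ]
  rw [Summable.tsum_finsetSum fun b hb =>
      (summable_avoidProb hconn (ne_of_mem_erase hb)).mul_left _,
    ← sum_erase_add _ _ (mem_univ v), hittingTime_self, mul_zero, add_zero]
  refine congrArg _ (sum_congr rfl fun b hb => ?_)
  rw [tsum_mul_left, hittingTime_eq_tsum_avoidProb hconn (ne_of_mem_erase hb)]

end Connected

def IsHarmonicOff (G : SimpleGraph V) (v : V) (δ : V → ℝ) : Prop :=
  ∀ u, u ≠ v → δ u = ∑ b, stepProb G u b * δ b

namespace IsHarmonicOff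

variable {δ : V → ℝ} (hδ : IsHarmonicOff G v δ)
include hδ

theorem eq_of_adj_of_forall_le (hmax : ∀ b, δ b ≤ δ u) (hu : u ≠ v) {b : V}
    (hadj : G.Adj u b) : δ b = δ u := by
  have hsum : ∑ c, stepProb G u c * (δ u - δ c) = 0 := by
    simp_rw [mul_sub]
    rw [sum_sub_distrib, ← sum_mul, sum_stepProb ((G.degree_pos_iff_exists_adj u).2 ⟨b, hadj⟩),
      one_mul, ← hδ u hu, sub_self]
  have hb := (sum_eq_zero_iff_of_nonneg fun c _ =>
    mul_nonneg (stepProb_nonneg u c) (sub_nonneg.2 (hmax c))).1 hsum b (mem_univ b)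
  rcases mul_eq_zero.1 hb with h | h
  · exact absurd h (stepProb_pos hadj).ne'
  · linarith

theorem eq_of_walk_of_forall_le (p : G.Walk u v) (hmax : ∀ b, δ b ≤ δ u) : δ v = δ u := by
  induction p with
  | nil => rfl
  | @cons u b v hadj q ih =>
    by_cases hu : u = v
    · rw [hu]
    · have hb := hδ.eq_of_adj_of_forall_le hmax hu hadj
      rw [ih hδ (hb ▸ hmax), hb]

theorem nonpos (hv : δ v = 0) (hconn : ∀ u, G.Reachable u v) (u : V) : δ u ≤ 0 := by
  have : Nonempty V := ⟨v⟩
  obtain ⟨u₀, hu₀⟩ := Finite.exists_max δ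
  calc δ u ≤ δ u₀ := hu₀ u
    _ = 0 := by rw [← hδ.eq_of_walk_of_forall_le (hconn u₀).some hu₀, hv]

end IsHarmonicOff

theorem isHarmonicOff_sub {g₁ g₂ : V → ℝ}
    (h₁ : ∀ u, u ≠ v → g₁ u = 1 + ∑ b, stepProb G u b * g₁ b)
    (h₂ : ∀ u, u ≠ v → g₂ u = 1 + ∑ b, stepProb G u b * g₂ b) :
    IsHarmonicOff G v (g₁ - g₂) := by
  intro u hu
  simp only [Pi.sub_apply, mul_sub, sum_sub_distrib, h₁ u hu, h₂ u hu]
  ring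

theorem hittingTime_eq_of_forall_eq_one_add (hconn : ∀ u, G.Reachable u v) {g : V → ℝ}
    (hgv : g v = 0) (hg : ∀ u, u ≠ v → g u = 1 + ∑ b, stepProb G u b * g b) (u : V) :
    hittingTime G u v = g u := by
  have hH : ∀ u, u ≠ v → hittingTime G u v = 1 + ∑ b, stepProb G u b * hittingTime G b v :=
    fun u hu => hittingTime_eq_one_add_sum hconn hu
  have h₁ := (isHarmonicOff_sub hH hg).nonpos (by simp [hittingTime_self, hgv]) hconn u
  have h₂ := (isHarmonicOff_sub hg hH).nonpos (by simp [hittingTime_self, hgv]) hconn u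
  simp only [Pi.sub_apply] at h₁ h₂
  linarith

end SimpleGraph

namespace daryTree

variable {d h : ℕ}

local notation "Vtx" => Σ n : Fin (h + 1), Fin (n : ℕ) → Fin d

theorem vertex_ext {x y : Vtx} (hxy : (x.1 : ℕ) = y.1)
    (h₂ : ∀ i (hx : i < (x.1 : ℕ)) (hy : i < (y.1 : ℕ)), x.2 ⟨i, hx⟩ = y.2 ⟨i, hy⟩) : x = y := by
  obtain ⟨⟨m, hm⟩, x⟩ := x
  obtain ⟨⟨k, hk⟩, y⟩ := y
  obtain rfl : m = k := hxy
  congr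
  exact funext fun i => h₂ i i.2 i.2

theorem eq_of_depth_eq_zero {x y : Vtx} (hx : (x.1 : ℕ) = 0) (hy : (y.1 : ℕ) = 0) : x = y :=
  vertex_ext (hx.trans hy.symm) fun i hi _ => absurd hi (by omega)

def parent (x : Vtx) : Vtx :=
  ⟨⟨(x.1 : ℕ) - 1, by have := x.1.isLt; omega⟩, fun i => x.2 (Fin.castLE (Nat.sub_le _ _) i)⟩

def child (x : Vtx) (hx : (x.1 : ℕ) < h) (j : Fin d) : Vtx :=
  ⟨⟨(x.1 : ℕ) + 1, by omega⟩, Fin.snoc (α := fun _ => Fin d) x.2 j⟩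

@[simp] theorem depth_parent (x : Vtx) : ((parent x).1 : ℕ) = x.1 - 1 := rfl

@[simp] theorem depth_child (x : Vtx) (hx : (x.1 : ℕ) < h) (j : Fin d) :
    ((child x hx j).1 : ℕ) = x.1 + 1 := rfl

theorem child_injective (x : Vtx) (hx : (x.1 : ℕ) < h) : Function.Injective (child x hx) := by
  intro j j' hjj'
  have := congrFun (eq_of_heq (Sigma.mk.inj_iff.1 hjj').2) (Fin.last _)
  simpa [child] using this

theorem child_ne_parent (x : Vtx) (hxh : (x.1 : ℕ) < h) (j : Fin d) :
    child x hxh j ≠ parent x := fun hxy => by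
  have := congrArg (fun z : Vtx => (z.1 : ℕ)) hxy
  simp at this
  omega

theorem exists_eq_child_iff {x y : Vtx} :
    (∃ _ : (x.1 : ℕ) + 1 = (y.1 : ℕ),
      ∀ i : Fin (x.1 : ℕ), y.2 ⟨i.val, by have := i.isLt; omega⟩ = x.2 i) ↔
      ∃ hx j, y = child x hx j := by
  constructor
  · rintro ⟨hxy, hagree⟩
    have hx : (x.1 : ℕ) < h := by omega
    refine ⟨hx, y.2 ⟨x.1, by omega⟩, vertex_ext (by simp [hxy]) fun i hi _ => ?_⟩
    obtain hi | rfl := (show i < x.1 ∨ i = x.1 by omega)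
    · exact (hagree ⟨i, hi⟩).trans (Fin.snoc_castSucc (α := fun _ => Fin d) ..).symm
    · simp [child, Fin.snoc]
  · rintro ⟨hx, j, rfl⟩
    exact ⟨rfl, fun i => Fin.snoc_castSucc (α := fun _ => Fin d) ..⟩

theorem exists_eq_parent_iff {x y : Vtx} :
    (∃ _ : (y.1 : ℕ) + 1 = (x.1 : ℕ),
      ∀ i : Fin (y.1 : ℕ), x.2 ⟨i.val, by have := i.isLt; omega⟩ = y.2 i) ↔
      0 < (x.1 : ℕ) ∧ y = parent x := by
  constructor
  · rintro ⟨hxy, hagree⟩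
    exact ⟨by omega, vertex_ext (by simp; omega) fun i hi _ => (hagree ⟨i, hi⟩).symm⟩
  · rintro ⟨hx, rfl⟩
    exact ⟨by simp; omega, fun i => rfl⟩

theorem adj_iff {x y : Vtx} :
    (daryTree d h).Adj x y ↔ (∃ hx j, y = child x hx j) ∨ (0 < (x.1 : ℕ) ∧ y = parent x) := by
  simp only [daryTree, SimpleGraph.fromRel_adj]
  rw [exists_eq_child_iff, exists_eq_parent_iff, and_iff_right_iff_imp]
  rintro (⟨hx, j, rfl⟩ | ⟨hx, rfl⟩) hxy <;>
    · have := congrArg (fun z : Vtx => (z.1 : ℕ)) hxy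
      simp at this <;> omega

theorem neighborFinset_of_depth_eq {x : Vtx} (hx : 0 < (x.1 : ℕ)) (hxh : (x.1 : ℕ) = h) :
    (daryTree d h).neighborFinset x = {parent x} := by
  ext y
  simp only [SimpleGraph.mem_neighborFinset, adj_iff, mem_singleton]
  constructor
  · rintro (⟨hx', -⟩ | ⟨-, rfl⟩)
    · omega
    · rfl
  · rintro rfl
    exact Or.inr ⟨hx, rfl⟩

theorem neighborFinset_of_depth_lt {x : Vtx} (hx : 0 < (x.1 : ℕ)) (hxh : (x.1 : ℕ) < h) :
    (daryTree d h).neighborFinset x = insert (parent x) (univ.image (child x hxh)) := by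
  ext y
  simp only [SimpleGraph.mem_neighborFinset, adj_iff, mem_insert, mem_image,
    mem_univ, true_and]
  constructor
  · rintro (⟨-, j, rfl⟩ | ⟨-, rfl⟩)
    · exact Or.inr ⟨j, rfl⟩
    · exact Or.inl rfl
  · rintro (rfl | ⟨j, rfl⟩)
    · exact Or.inr ⟨hx, rfl⟩
    · exact Or.inl ⟨hxh, j, rfl⟩

theorem reachable_of_depth_eq_zero (x : Vtx) {y : Vtx} (hy : (y.1 : ℕ) = 0) :
    (daryTree d h).Reachable x y := by
  induction hn : (x.1 : ℕ) generalizing x with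
  | zero => rw [eq_of_depth_eq_zero hn hy]
  | succ n ih =>
    have hadj : (daryTree d h).Adj x (parent x) := adj_iff.2 (Or.inr ⟨by omega, rfl⟩)
    exact hadj.reachable.trans (ih _ (by simp [hn]))

theorem f_sub_f_eq_one_add_sum_stepProb (x : Vtx) (hx : 0 < (x.1 : ℕ)) :
    f h d - f (h - x.1) d =
      1 + ∑ y, stepProb (daryTree d h) x y * (f h d - f (h - y.1) d) := by
  rw [SimpleGraph.sum_stepProb_mul, ← SimpleGraph.card_neighborFinset_eq_degree]
  obtain hxh | hxh := (show (x.1 : ℕ) = h ∨ (x.1 : ℕ) < h by omega)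
  · rw [neighborFinset_of_depth_eq hx hxh]
    simp [hxh, show h - (h - 1) = 1 by omega, f_one, f_zero]
  · have hp : parent x ∉ univ.image (child x hxh) := by
      simp [child_ne_parent x hxh]
    rw [neighborFinset_of_depth_lt hx hxh, sum_insert hp, card_insert_of_notMem hp,
      sum_image fun _ _ _ _ hj => child_injective x hxh hj,
      card_image_of_injective _ (child_injective x hxh)]
    obtain ⟨m, hm⟩ : ∃ m, h - x.1 = m + 1 := ⟨h - x.1 - 1, by omega⟩
    simp only [depth_parent, depth_child, sum_const, card_univ, Fintype.card_fin,
      nsmul_eq_mul, show h - (x.1 - 1) = m + 2 by omega, show h - (x.1 + 1) = m by omega, hm]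
    have := f_add_two m (d : ℝ)
    field_simp
    push_cast
    linear_combination this

end daryTree

theorem stmt_13_general (d h : ℕ)
    (u : Σ n : Fin (h + 1), Fin (n : ℕ) → Fin d) (l : ℕ) (hl : (u.1 : ℕ) = l)
    (root : Σ n : Fin (h + 1), Fin (n : ℕ) → Fin d)
    (hroot : root = ⟨⟨0, Nat.succ_pos h⟩, fun i => (Nat.not_lt_zero _ i.isLt).elim⟩) :
    hittingTime (daryTree d h) u root = f h d - f (h - l) d := by
  have hroot₀ : (root.1 : ℕ) = 0 := by rw [hroot]
  subst hl
  refine SimpleGraph.hittingTime_eq_of_forall_eq_one_add (g := fun x => f h d - f (h - x.1) d)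
    (fun x => daryTree.reachable_of_depth_eq_zero x hroot₀) (by simp [hroot₀]) (fun x hx => ?_) u
  refine daryTree.f_sub_f_eq_one_add_sum_stepProb x (Nat.pos_of_ne_zero fun hx₀ => hx ?_)
  exact daryTree.eq_of_depth_eq_zero hx₀ hroot₀

theorem stmt_13 (d h : ℕ) (hd : 1 ≤ d)
    (u : Σ n : Fin (h + 1), Fin (n : ℕ) → Fin d) (l : ℕ) (hl : (u.1 : ℕ) = l)
    (root : Σ n : Fin (h + 1), Fin (n : ℕ) → Fin d)
    (hroot : root = ⟨⟨0, Nat.succ_pos h⟩, fun i => (Nat.not_lt_zero _ i.isLt).elim⟩) :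
    hittingTime (daryTree d h) u root = f h d - f (h - l) d :=
  stmt_13_general d h u l hl root hroot
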